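/- The sequence c_n = (n + 1/3)·ln(1 - 1/(2(n+1/3))) - (1/2)ln n - ln W_n + (1/2)ln(e/π) + 1/(144n³) is strictly decreasing and converges to 0; in particular c_n > 0 for all n ≥ 1. -/

import Mathlib

open Real Filter Topology

noncomputable def W (n : ℕ) : ℝ :=
  (∏ k ∈ Finset.range n, (2 * (k : ℝ) + 1)) / (∏ k ∈ Finset.range n, (2 * (k : ℝ) + 2))

noncomputable def c (n : ℕ) : ℝ :=
  ((n : ℝ) + 1/3) * Real.log (1 - 1 / (2 * ((n : ℝ) + 1/3))) - (1/2) * Real.log n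
    - Real.log (W n) + (1/2) * Real.log (Real.exp 1 / π) + 1 / (144 * (n : ℝ) ^ 3)

lemma W_pos (n : ℕ) : 0 < W n := by
  unfold W
  apply div_pos <;> exact Finset.prod_pos (fun k _ => by positivity)

lemma W_succ (n : ℕ) : W (n+1) = W n * ((2*(n:ℝ)+1)/(2*(n:ℝ)+2)) := by
  unfold W
  rw [Finset.prod_range_succ, Finset.prod_range_succ, div_mul_div_comm]

lemma log_ub (m : ℕ) {y : ℝ} (h0 : 0 ≤ y) (h1 : y < 1) :
    Real.log (1-y) ≤ -(∑ i ∈ Finset.range m, y^(i+1)/(i+1)) + y^(m+1)/(1-y) := by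
  have h := Real.abs_log_sub_add_sum_range_le (by rwa [abs_of_nonneg h0]) m
  rw [abs_of_nonneg h0] at h
  have := abs_le.mp h
  linarith [this.1, this.2]

lemma log_lb (m : ℕ) {y : ℝ} (h0 : 0 ≤ y) (h1 : y < 1) :
    -(∑ i ∈ Finset.range m, y^(i+1)/(i+1)) - y^(m+1)/(1-y) ≤ Real.log (1-y) := by
  have h := Real.abs_log_sub_add_sum_range_le (by rwa [abs_of_nonneg h0]) m
  rw [abs_of_nonneg h0] at h
  have := abs_le.mp h
  linarith [this.1, this.2]

lemma log_ub_six {y : ℝ} (h0 : 0 ≤ y) (h1 : y < 1) :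
    Real.log (1-y) ≤ -(y + y^2/2 + y^3/3 + y^4/4 + y^5/5 + y^6/6) + y^7/(1-y) := by
  have h := log_ub 6 h0 h1
  simp [Finset.sum_range_succ] at h
  linarith

lemma log_lb_eight {y : ℝ} (h0 : 0 ≤ y) (h1 : y < 1) :
    -(y + y^2/2 + y^3/3 + y^4/4 + y^5/5 + y^6/6 + y^7/7 + y^8/8) - y^9/(1-y)
      ≤ Real.log (1-y) := by
  have h := log_lb 8 h0 h1
  simp [Finset.sum_range_succ] at h
  linarith

lemma log_ub_twelve {y : ℝ} (h0 : 0 ≤ y) (h1 : y < 1) :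
    Real.log (1-y) ≤ -(y + y^2/2 + y^3/3 + y^4/4 + y^5/5 + y^6/6 + y^7/7 + y^8/8 + y^9/9
      + y^10/10 + y^11/11 + y^12/12) + y^13/(1-y) := by
  have h := log_ub 12 h0 h1
  simp [Finset.sum_range_succ] at h
  linarith

lemma log_lb_six {y : ℝ} (h0 : 0 ≤ y) (h1 : y < 1) :
    -(y + y^2/2 + y^3/3 + y^4/4 + y^5/5 + y^6/6) - y^7/(1-y) ≤ Real.log (1-y) := by
  have h := log_lb 6 h0 h1
  simp [Finset.sum_range_succ] at h
  linarith

set_option maxHeartbeats 2000000 in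
lemma main_ineq (x y1 y2 y3 y4 : ℝ) (hx : 1 ≤ x)
    (hy1 : y1 = 3/(6*x+8)) (hy2 : y2 = 3/(6*x+2)) (hy3 : y3 = 1/(x+1)) (hy4 : y4 = 1/(2*x+2)) :
    (x+4/3) * (-(y1 + y1^2/2 + y1^3/3 + y1^4/4 + y1^5/5 + y1^6/6) + y1^7/(1-y1)) + (x+1/3) * ((y2 + y2^2/2 + y2^3/3 + y2^4/4 + y2^5/5 + y2^6/6 + y2^7/7 + y2^8/8) + y2^9/(1-y2)) + (1/2) * (-(y3 + y3^2/2 + y3^3/3 + y3^4/4 + y3^5/5 + y3^6/6 + y3^7/7 + y3^8/8 + y3^9/9 + y3^10/10 + y3^11/11 + y3^12/12) + y3^13/(1-y3)) + ((y4 + y4^2/2 + y4^3/3 + y4^4/4 + y4^5/5 + y4^6/6) + y4^7/(1-y4)) + (1/(144*(x+1)^3) - 1/(144*x^3)) < 0 := by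
  subst hy1 hy2 hy3 hy4
  have e1 : (6*x+8) ≠ 0 := by linarith
  have e2 : (6*x+5) ≠ 0 := by linarith
  have e3 : (6*x+2) ≠ 0 := by linarith
  have e4 : (6*x-1) ≠ 0 := by linarith
  have e5 : (x+1) ≠ 0 := by linarith
  have e6 : x ≠ 0 := by linarith
  have e7 : (2*x+1) ≠ 0 := by linarith
  have e8 : (2*x+2) ≠ 0 := by linarith
  have g1 : (3/(6*x+8))^7/(1-(3/(6*x+8))) = 3^7/((6*x+8)^6*(6*x+5)) := by
    rw [show (1:ℝ)-(3/(6*x+8)) = (6*x+5)/(6*x+8) by field_simp; ring]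
    field_simp
  have g2 : (3/(6*x+2))^9/(1-(3/(6*x+2))) = 3^9/((6*x+2)^8*(6*x-1)) := by
    rw [show (1:ℝ)-(3/(6*x+2)) = (6*x-1)/(6*x+2) by field_simp; ring]
    field_simp
  have g3 : (1/(x+1))^13/(1-(1/(x+1))) = 1^13/((x+1)^12*x) := by
    rw [show (1:ℝ)-(1/(x+1)) = x/(x+1) by field_simp; ring]
    field_simp
  have g4 : (1/(2*x+2))^7/(1-(1/(2*x+2))) = 1^7/((2*x+2)^6*(2*x+1)) := by
    rw [show (1:ℝ)-(1/(2*x+2)) = (2*x+1)/(2*x+2) by field_simp; ring]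
    field_simp
  rw [g1, g2, g3, g4]
  have d1 : (0:ℝ) < ((6*x+8)^6*(6*x+5)) := mul_pos (pow_pos (by linarith) 6) (by linarith)
  have d2 : (0:ℝ) < ((6*x+2)^8*(6*x-1)) := mul_pos (pow_pos (by linarith) 8) (by linarith)
  have d3 : (0:ℝ) < ((x+1)^12*x) := mul_pos (pow_pos (by linarith) 12) (by linarith)
  have d4 : (0:ℝ) < ((2*x+2)^6*(2*x+1)) := mul_pos (pow_pos (by linarith) 6) (by linarith)
  have d5 : (0:ℝ) < (144*x^3*(x+1)^3) := by positivity
  have hA : (x+4/3) * (-((3/(6*x+8)) + (3/(6*x+8))^2/2 + (3/(6*x+8))^3/3 + (3/(6*x+8))^4/4 + (3/(6*x+8))^5/5 + (3/(6*x+8))^6/6) + 3^7/((6*x+8)^6*(6*x+5))) = ((-818086) + (-45090309/10)*x + (-52858683/5)*x^2 + (-68560533/5)*x^3 + (-10638702)*x^4 + (-4939704)*x^5 + (-1271376)*x^6 + (-139968)*x^7) / ((6*x+8)^6*(6*x+5)) := by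
    rw [eq_div_iff (ne_of_gt d1)]
    field_simp
    ring
  have hB : (x+1/3) * (((3/(6*x+2)) + (3/(6*x+2))^2/2 + (3/(6*x+2))^3/3 + (3/(6*x+2))^4/4 + (3/(6*x+2))^5/5 + (3/(6*x+2))^6/6 + (3/(6*x+2))^7/7 + (3/(6*x+2))^8/8) + 3^9/((6*x+2)^8*(6*x-1))) = ((1500727/280) + (534861/40)*x + (-729783/140)*x^2 + (4701726/35)*x^3 + (5664816/5)*x^4 + (23074308/5)*x^5 + 11214936*x^6 + 16586208*x^7 + 13856832*x^8 + 5038848*x^9) / ((6*x+2)^8*(6*x-1)) := by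
    rw [eq_div_iff (ne_of_gt d2)]
    rw [mul_assoc, add_mul _ ((3:ℝ)^9/((6*x+2)^8*(6*x-1))), div_mul_cancel₀ _ (ne_of_gt d2)]
    field_simp
    ring
  have hC : (1/2 : ℝ) * (-((1/(x+1)) + (1/(x+1))^2/2 + (1/(x+1))^3/3 + (1/(x+1))^4/4 + (1/(x+1))^5/5 + (1/(x+1))^6/6 + (1/(x+1))^7/7 + (1/(x+1))^8/8 + (1/(x+1))^9/9 + (1/(x+1))^10/10 + (1/(x+1))^11/11 + (1/(x+1))^12/12) + 1^13/((x+1)^12*x)) = ((1/2) + (-86021/55440)*x + (-58301/4620)*x^2 + (-44441/840)*x^3 + (-35201/252)*x^4 + (-28271/112)*x^5 + (-22727/70)*x^6 + (-18107/60)*x^7 + (-2021/10)*x^8 + (-763/8)*x^9 + (-181/6)*x^10 + (-23/4)*x^11 + (-1/2)*x^12) / ((x+1)^12*x) := by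
    rw [eq_div_iff (ne_of_gt d3)]
    field_simp
    ring
  have hD4 : (((1/(2*x+2)) + (1/(2*x+2))^2/2 + (1/(2*x+2))^3/3 + (1/(2*x+2))^4/4 + (1/(2*x+2))^5/5 + (1/(2*x+2))^6/6) + 1^7/((2*x+2)^6*(2*x+1))) = ((1357/30) + (4363/15)*x + (3909/5)*x^2 + (3326/3)*x^3 + (2632/3)*x^4 + 368*x^5 + 64*x^6) / ((2*x+2)^6*(2*x+1)) := by
    rw [eq_div_iff (ne_of_gt d4)]
    field_simp
    ring
  have hE : (1/(144*(x+1)^3) - 1/(144*x^3)) = ((-1) + (-3)*x + (-3)*x^2) / (144*x^3*(x+1)^3) := by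
    rw [eq_div_iff (ne_of_gt d5)]
    field_simp
    ring
  rw [hA, hB, hC, hD4, hE]
  rw [div_add_div _ _ (ne_of_gt d1) (ne_of_gt d2),
      div_add_div _ _ (ne_of_gt (mul_pos d1 d2)) (ne_of_gt d3),
      div_add_div _ _ (ne_of_gt (mul_pos (mul_pos d1 d2) d3)) (ne_of_gt d4),
      div_add_div _ _ (ne_of_gt (mul_pos (mul_pos (mul_pos d1 d2) d3) d4)) (ne_of_gt d5)]
  apply div_neg_of_neg_of_pos
  · have hy : (0:ℝ) ≤ x - 1 := by linarith
    have hQ : (0:ℝ) < 183976601290128670851072 + (x-1) * ((229856882149662928033284096/55) + (x-1) * ((2501029453187462002416549888/55) + (x-1) * (316409917805216637495803904 + (x-1) * ((87179036967779073201606230016/55) + (x-1) * ((335497013432791391338877681664/55) + (x-1) * ((7232330341591879690405615239168/385) + (x-1) * ((18328247686739434243337983361024/385) + (x-1) * ((39001528049455589838910392369152/385) + (x-1) * ((14150215762655546632786667372544/77) + (x-1) * ((110695914498194539374041840484352/385) + (x-1) * ((150742096399548710668262686326784/385) + (x-1) * ((179957811867440624299766125166592/385) + (x-1) * ((5411952808506022462143779045376/11)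 + (x-1) * ((176583247492671643751909129453568/385) + (x-1) * ((29262501983364794725973738127360/77) + (x-1) * ((108038047832023732515156807122944/385) + (x-1) * ((71231015096454776754927896363008/385) + (x-1) * ((8397085118535861636366868021248/77) + (x-1) * ((22137646675143371800992591773696/385) + (x-1) * ((2088347761465943258054165659648/77) + (x-1) * ((4403226926075788909809199497216/385) + (x-1) * ((1658121120440649901752738865152/385) + (x-1) * ((556585938087885682479800008704/385) + (x-1) * ((166135446594082514750197948416/385) + (x-1) * ((43958975890639316772352278528/385) + (x-1) * ((10270603550232934893596786688/385) + (x-1) * ((2108812391473747706940653568/385) + (x-1) * ((378320802979613248090128384/385) + (x-1) * ((58884411373435151840231424/385) + (x-1) * ((7882543441668669591969792/385) + (x-1) * ((897448775068788047364096/385) + (x-1) * ((7782389793241879191552/35) + (x-1) * ((608636224664676974592/35) + (x-1) * ((37727231193260457984/35) + (x-1) * ((1749099740519006208/35) + (x-1) * ((54175340836159488/35) + (x-1) * ((120367356051456/5)))))))))))))))))))))))))))))))))))))) := by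
      refine add_pos_of_pos_of_nonneg (by norm_num) (mul_nonneg hy ?_)
      refine add_nonneg (by norm_num) (mul_nonneg hy ?_)
      refine add_nonneg (by norm_num) (mul_nonneg hy ?_)
      refine add_nonneg (by norm_num) (mul_nonneg hy ?_)
      refine add_nonneg (by norm_num) (mul_nonneg hy ?_)
      refine add_nonneg (by norm_num) (mul_nonneg hy ?_)
      refine add_nonneg (by norm_num) (mul_nonneg hy ?_)
      refine add_nonneg (by norm_num) (mul_nonneg hy ?_)
      refine add_nonneg (by norm_num) (mul_nonneg hy ?_)
      refine add_nonneg (by norm_num) (mul_nonneg hy ?_)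
      refine add_nonneg (by norm_num) (mul_nonneg hy ?_)
      refine add_nonneg (by norm_num) (mul_nonneg hy ?_)
      refine add_nonneg (by norm_num) (mul_nonneg hy ?_)
      refine add_nonneg (by norm_num) (mul_nonneg hy ?_)
      refine add_nonneg (by norm_num) (mul_nonneg hy ?_)
      refine add_nonneg (by norm_num) (mul_nonneg hy ?_)
      refine add_nonneg (by norm_num) (mul_nonneg hy ?_)
      refine add_nonneg (by norm_num) (mul_nonneg hy ?_)
      refine add_nonneg (by norm_num) (mul_nonneg hy ?_)
      refine add_nonneg (by norm_num) (mul_nonneg hy ?_)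
      refine add_nonneg (by norm_num) (mul_nonneg hy ?_)
      refine add_nonneg (by norm_num) (mul_nonneg hy ?_)
      refine add_nonneg (by norm_num) (mul_nonneg hy ?_)
      refine add_nonneg (by norm_num) (mul_nonneg hy ?_)
      refine add_nonneg (by norm_num) (mul_nonneg hy ?_)
      refine add_nonneg (by norm_num) (mul_nonneg hy ?_)
      refine add_nonneg (by norm_num) (mul_nonneg hy ?_)
      refine add_nonneg (by norm_num) (mul_nonneg hy ?_)
      refine add_nonneg (by norm_num) (mul_nonneg hy ?_)
      refine add_nonneg (by norm_num) (mul_nonneg hy ?_)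
      refine add_nonneg (by norm_num) (mul_nonneg hy ?_)
      refine add_nonneg (by norm_num) (mul_nonneg hy ?_)
      refine add_nonneg (by norm_num) (mul_nonneg hy ?_)
      refine add_nonneg (by norm_num) (mul_nonneg hy ?_)
      refine add_nonneg (by norm_num) (mul_nonneg hy ?_)
      refine add_nonneg (by norm_num) (mul_nonneg hy ?_)
      refine add_nonneg (by norm_num) (mul_nonneg hy ?_)
      norm_num
    linarith [hQ]
  · exact mul_pos (mul_pos (mul_pos (mul_pos d1 d2) d3) d4) d5


lemma c_step (n : ℕ) (hn : 1 ≤ n) : c (n+1) < c n := by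
  have hx : (1:ℝ) ≤ (n:ℝ) := by exact_mod_cast hn
  have hx0 : (0:ℝ) < (n:ℝ) := by linarith
  have hW := W_pos n
  have hdiff : c (n+1) - c n =
      ((n:ℝ)+4/3) * Real.log (1 - 3/(6*(n:ℝ)+8)) - ((n:ℝ)+1/3) * Real.log (1 - 3/(6*(n:ℝ)+2))
      + (1/2) * Real.log (1 - 1/((n:ℝ)+1)) - Real.log (1 - 1/(2*(n:ℝ)+2))
      + (1/(144*((n:ℝ)+1)^3) - 1/(144*(n:ℝ)^3)) := by
    have e1 : 1 - 1/(2*(((n:ℝ)+1)+1/3)) = 1 - 3/(6*(n:ℝ)+8) := by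
      have h1 : (2*(((n:ℝ)+1)+1/3)) ≠ 0 := by linarith
      have h2 : (6*(n:ℝ)+8) ≠ 0 := by linarith
      field_simp
      ring
    have e2 : 1 - 1/(2*((n:ℝ)+1/3)) = 1 - 3/(6*(n:ℝ)+2) := by
      have h1 : (2*((n:ℝ)+1/3)) ≠ 0 := by linarith
      have h2 : (6*(n:ℝ)+2) ≠ 0 := by linarith
      field_simp
      ring
    have e3 : Real.log (W (n+1)) = Real.log (W n) + Real.log (1 - 1/(2*(n:ℝ)+2)) := by
      rw [W_succ, Real.log_mul (ne_of_gt hW) (by positivity)]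
      congr 1
      have h1 : (2*(n:ℝ)+2) ≠ 0 := by linarith
      rw [show (1:ℝ) - 1/(2*(n:ℝ)+2) = (2*(n:ℝ)+1)/(2*(n:ℝ)+2) by field_simp; ring]
    have e4 : Real.log ((n:ℝ)+1) = Real.log (n:ℝ) - Real.log (1 - 1/((n:ℝ)+1)) := by
      have h1 : 1 - 1/((n:ℝ)+1) = (n:ℝ)/((n:ℝ)+1) := by
        have : ((n:ℝ)+1) ≠ 0 := by linarith
        field_simp
        ring
      rw [h1, Real.log_div (ne_of_gt hx0) (by linarith)]
      ring
    unfold c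
    push_cast
    rw [e1, e2, e3, e4]
    ring
  have hy1a : (0:ℝ) ≤ 3/(6*(n:ℝ)+8) := by positivity
  have hy1b : 3/(6*(n:ℝ)+8) < 1 := by rw [div_lt_one (by linarith)]; linarith
  have hy2a : (0:ℝ) ≤ 3/(6*(n:ℝ)+2) := by positivity
  have hy2b : 3/(6*(n:ℝ)+2) < 1 := by rw [div_lt_one (by linarith)]; linarith
  have hy3a : (0:ℝ) ≤ 1/((n:ℝ)+1) := by positivity
  have hy3b : 1/((n:ℝ)+1) < 1 := by rw [div_lt_one (by linarith)]; linarith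
  have hy4a : (0:ℝ) ≤ 1/(2*(n:ℝ)+2) := by positivity
  have hy4b : 1/(2*(n:ℝ)+2) < 1 := by rw [div_lt_one (by linarith)]; linarith
  have b1 := log_ub_six hy1a hy1b
  have b2 := log_lb_eight hy2a hy2b
  have b3 := log_ub_twelve hy3a hy3b
  have b4 := log_lb_six hy4a hy4b
  have p1 := mul_le_mul_of_nonneg_left b1 (show (0:ℝ) ≤ (n:ℝ)+4/3 by linarith)
  have p2 := mul_le_mul_of_nonneg_left b2 (show (0:ℝ) ≤ (n:ℝ)+1/3 by linarith)
  have hmain := main_ineq (n:ℝ) (3/(6*(n:ℝ)+8)) (3/(6*(n:ℝ)+2)) (1/((n:ℝ)+1)) (1/(2*(n:ℝ)+2))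
    hx rfl rfl rfl rfl
  linarith [p1, p2, b3, b4, hmain, hdiff]

-- identity with Wallis product
lemma wallis_inv (n : ℕ) : Real.Wallis.W n * ((W n)^2 * (2*(n:ℝ)+1)) = 1 := by
  induction n with
  | zero => simp [Real.Wallis.W, W]
  | succ n ih =>
    rw [Real.Wallis.W_succ, W_succ]
    push_cast
    have h1 : (2*(n:ℝ)+1) ≠ 0 := by positivity
    have h2 : (2*(n:ℝ)+2) ≠ 0 := by positivity
    have h3 : (2*(n:ℝ)+3) ≠ 0 := by positivity
    field_simp at ih ⊢
    linear_combination ((2*(n:ℝ)+2)^2*(2*(n:ℝ)+1)*(2*(n:ℝ)+3) - (16*(n:ℝ)^4+64*(n:ℝ)^3+92*(n:ℝ)^2+54*(n:ℝ)+9)) * ih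

lemma c_eq (n : ℕ) (hn : 1 ≤ n) :
    c n = ((n:ℝ)+1/3) * Real.log (1 - 3/(6*(n:ℝ)+2)) + 1/2
      - (1/2) * Real.log ((W n)^2 * (2*(n:ℝ)+1))
      - (1/2) * Real.log (π * (n:ℝ) / (2*(n:ℝ)+1)) + 1/(144*(n:ℝ)^3) := by
  have hx : (1:ℝ) ≤ (n:ℝ) := by exact_mod_cast hn
  have hn0 : (0:ℝ) < (n:ℝ) := by linarith
  have hW := W_pos n
  have h1 : (0:ℝ) < 2*(n:ℝ)+1 := by linarith
  have harg : 1 - 1 / (2 * ((n : ℝ) + 1/3)) = 1 - 3/(6*(n:ℝ)+2) := by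
    have : (6*(n:ℝ)+2) ≠ 0 := by linarith
    have : (2*((n:ℝ)+1/3)) ≠ 0 := by linarith
    field_simp
    ring
  have l1 : Real.log ((W n)^2 * (2*(n:ℝ)+1)) = 2*Real.log (W n) + Real.log (2*(n:ℝ)+1) := by
    rw [Real.log_mul (by positivity) (by positivity), Real.log_pow]; push_cast; ring
  have l2 : Real.log (π * (n:ℝ) / (2*(n:ℝ)+1)) = Real.log π + Real.log n - Real.log (2*(n:ℝ)+1) := by
    rw [Real.log_div (by positivity) (by positivity), Real.log_mul (ne_of_gt pi_pos) (ne_of_gt hn0)]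
  have l3 : Real.log (Real.exp 1 / π) = 1 - Real.log π := by
    rw [Real.log_div (ne_of_gt (exp_pos 1)) (ne_of_gt pi_pos), Real.log_exp]
  unfold c
  rw [harg, l1, l2, l3]
  ring

lemma c_tendsto : Tendsto c atTop (𝓝 0) := by
  have hT1 : Tendsto (fun n : ℕ => ((n:ℝ)+1/3) * Real.log (1 - 3/(6*(n:ℝ)+2)))
      atTop (𝓝 (-(1/2))) := by
    have base := Real.tendsto_mul_log_one_add_div_atTop (-(1/2))
    have comp : Tendsto (fun n : ℕ => (n:ℝ)+1/3) atTop atTop :=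
      tendsto_atTop_add_const_right _ _ tendsto_natCast_atTop_atTop
    have := base.comp comp
    refine this.congr' ?_
    filter_upwards [eventually_ge_atTop 1] with n hn
    have hn0 : (0:ℝ) < (n:ℝ) := by exact_mod_cast Nat.lt_of_lt_of_le Nat.zero_lt_one hn
    have h2 : ((n:ℝ)+1/3) ≠ 0 := by linarith
    have h3 : (6*(n:ℝ)+2) ≠ 0 := by linarith
    simp only [Function.comp_apply]
    congr 1
    congr 1
    field_simp
    ring
  have hT2 : Tendsto (fun n : ℕ => Real.log ((W n)^2 * (2*(n:ℝ)+1))) atTop (𝓝 (Real.log (2/π))) := by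
    have h1 : Tendsto (fun n : ℕ => (W n)^2 * (2*(n:ℝ)+1)) atTop (𝓝 (2/π)) := by
      have h2 : ∀ n, (W n)^2 * (2*(n:ℝ)+1) = (Real.Wallis.W n)⁻¹ := by
        intro n
        have := wallis_inv n
        have hw : Real.Wallis.W n ≠ 0 := ne_of_gt (Real.Wallis.W_pos n)
        field_simp
        linarith [this]
      simp_rw [h2]
      have := (Real.Wallis.tendsto_W_nhds_pi_div_two).inv₀ (by positivity)
      convert this using 2
      rw [inv_div]
    exact (Real.continuousAt_log (by positivity)).tendsto.comp h1
  have hT3 : Tendsto (fun n : ℕ => Real.log (π * (n:ℝ) / (2*(n:ℝ)+1))) atTop (𝓝 (Real.log (π/2))) := by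
    have h1 : Tendsto (fun n : ℕ => π * (n:ℝ) / (2*(n:ℝ)+1)) atTop (𝓝 (π/2)) := by
      have h2 : Tendsto (fun n : ℕ => (2 + 1/(n:ℝ))) atTop (𝓝 2) := by
        have := tendsto_one_div_atTop_nhds_zero_nat (𝕜 := ℝ)
        simpa using (tendsto_const_nhds (x := (2:ℝ)) (f := atTop)).add this
      have h3 : Tendsto (fun n : ℕ => π / (2 + 1/(n:ℝ))) atTop (𝓝 (π/2)) :=
        tendsto_const_nhds.div h2 (by norm_num)
      refine h3.congr' ?_
      filter_upwards [eventually_ge_atTop 1] with n hn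
      have hn0 : (0:ℝ) < (n:ℝ) := by exact_mod_cast Nat.lt_of_lt_of_le Nat.zero_lt_one hn
      have : (2*(n:ℝ)+1) ≠ 0 := by linarith
      field_simp
    exact (Real.continuousAt_log (by positivity)).tendsto.comp h1
  have hT4 : Tendsto (fun n : ℕ => 1/(144*(n:ℝ)^3)) atTop (𝓝 0) := by
    apply Tendsto.div_atTop (tendsto_const_nhds (x := (1:ℝ)))
    exact ((tendsto_pow_atTop (by norm_num : (3:ℕ) ≠ 0)).comp
      tendsto_natCast_atTop_atTop).const_mul_atTop (by norm_num)
  have hsum : Tendsto (fun n : ℕ => (((n:ℝ)+1/3) * Real.log (1 - 3/(6*(n:ℝ)+2)) + 1/2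
      - (1/2) * Real.log ((W n)^2 * (2*(n:ℝ)+1))
      - (1/2) * Real.log (π * (n:ℝ) / (2*(n:ℝ)+1)) + 1/(144*(n:ℝ)^3))) atTop
      (𝓝 (-(1/2) + 1/2 - (1/2) * Real.log (2/π) - (1/2) * Real.log (π/2) + 0)) := by
    exact ((((hT1.add tendsto_const_nhds).sub (hT2.const_mul (1/2))).sub
      (hT3.const_mul (1/2))).add hT4)
  have hval : -(1/2 : ℝ) + 1/2 - (1/2) * Real.log (2/π) - (1/2) * Real.log (π/2) + 0 = 0 := by
    have hpi : π ≠ 0 := ne_of_gt pi_pos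
    have hl : Real.log (2/π) + Real.log (π/2) = 0 := by
      rw [← Real.log_mul (by positivity) (by positivity),
        show (2/π)*(π/2) = 1 by field_simp]
      exact Real.log_one
    linarith
  rw [← hval]
  refine hsum.congr' ?_
  filter_upwards [eventually_ge_atTop 1] with n hn
  exact (c_eq n hn).symm


theorem c_decreasing_to_zero :
    StrictAntiOn c (Set.Ici 1) ∧ Tendsto c atTop (𝓝 0) ∧ ∀ n : ℕ, 1 ≤ n → 0 < c n := by
  have hanti : StrictAntiOn c (Set.Ici 1) := by
    intro a ha b _ hab
    have ha' : 1 ≤ a := Set.mem_Ici.mp ha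
    have key : ∀ m, a+1 ≤ m → c m < c a := by
      intro m hm
      induction m, hm using Nat.le_induction with
      | base => exact c_step a ha'
      | succ m hm ih => exact lt_trans (c_step m (by omega)) ih
    exact key b hab
  have hnonneg : ∀ m, 1 ≤ m → 0 ≤ c m := by
    intro m hm
    refine le_of_tendsto c_tendsto ?_
    filter_upwards [eventually_ge_atTop (m+1)] with k hk
    exact (hanti (Set.mem_Ici.mpr hm) (Set.mem_Ici.mpr (by omega)) (by omega)).le
  refine ⟨hanti, c_tendsto, fun n hn => ?_⟩
  calc (0:ℝ) ≤ c (n+1) := hnonneg (n+1) (by omega)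
    _ < c n := c_step n hn
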